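/- Let N ≥ 2, 1 ≤ n < N, and Ψ ∈ ℂ² ⊗ ℂⁿ, regarded as an element of ℂ² ⊗ ℂᴺ via the inclusion ℂⁿ ⊕ 0 ⊆ ℂᴺ. Then μ₀₀^{ℂᴺ}(Ψ), the projection of ΨΨ* onto sl(ℂ²)⊗sl(ℂᴺ), equals the block-diagonal matrix diag( μ^{ℂⁿ}_{0, 1−n/N}(Ψ), −(1/N)·tr_{ℂⁿ}(μ^{ℂⁿ}_{0,1}(Ψ)) ⊗ Id_{ℂ^{N−n}} ), where μ^{ℂⁿ}_{0,τ}(Ψ) = P(ΨΨ*) + τQ(ΨΨ*) with P, Q the orthogonal projections onto sl(ℂ²)⊗sl(ℂⁿ) and sl(ℂ²)⊗ℂ·Id_{ℂⁿ}, and tr_{ℂⁿ} is the partial trace over the ℂⁿ factor. -/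
import Mathlib


open Matrix

/-- `M − (1/d)·tr(M)·Id`: the `1/d`-normalised trace-free part (over a space of
dimension `d`, applied to a matrix on any index set). -/
noncomputable def tfd {I : Type*} [Fintype I] [DecidableEq I] (d : ℕ)
    (M : Matrix I I ℂ) : Matrix I I ℂ :=
  M - (M.trace / (d : ℂ)) • 1

/-- The rank-one matrix `α β*` with entries `αᵢ · conj βⱼ`. -/
noncomputable def op {I : Type*} [Fintype I] (α β : I → ℂ) : Matrix I I ℂ :=
  vecMulVec α (star β)

lemma op_elim {n k : ℕ} (α β : Fin n → ℂ) :
    op (Sum.elim α 0 : Fin n ⊕ Fin k → ℂ) (Sum.elim β 0) =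
      fromBlocks (op α β) 0 0 0 := by
  ext i j
  cases i <;> cases j <;>
    simp [op, vecMulVec, fromBlocks]

lemma fromBlocks_sub' {n k : ℕ} (A A' : Matrix (Fin n) (Fin n) ℂ)
    (D D' : Matrix (Fin k) (Fin k) ℂ) :
    fromBlocks A 0 0 D - fromBlocks A' 0 0 D' =
      fromBlocks (A - A') 0 0 (D - D') := by
  ext i j; cases i <;> cases j <;> simp [fromBlocks]

lemma tfd_blocks {n k : ℕ} (d : ℕ) (M : Matrix (Fin n) (Fin n) ℂ) :
    tfd d (fromBlocks M 0 0 (0 : Matrix (Fin k) (Fin k) ℂ)) =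
      fromBlocks (tfd d M) 0 0 ((-(M.trace / (d : ℂ))) • 1) := by
  unfold tfd
  have ht : (fromBlocks M 0 0 (0 : Matrix (Fin k) (Fin k) ℂ)).trace = M.trace := by
    simp [Matrix.trace, Fintype.sum_sum_type, fromBlocks, Matrix.diag]
  rw [ht, ← fromBlocks_one, fromBlocks_smul, smul_zero, smul_zero, fromBlocks_sub']
  simp [neg_smul]

lemma smul_tfd_blocks {n k : ℕ} (c : ℂ) (d : ℕ) (M : Matrix (Fin n) (Fin n) ℂ) :
    c • tfd d (fromBlocks M 0 0 (0 : Matrix (Fin k) (Fin k) ℂ)) =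
      fromBlocks (c • tfd d M) 0 0 ((-(c * M.trace / (d : ℂ))) • 1) := by
  rw [tfd_blocks, fromBlocks_smul, smul_smul]
  ring_nf
  simp

/-- let `N = n + k ≥ 2`, `1 ≤ n < N`, and `Ψ = (α,β) ∈ ℂ² ⊗ ℂⁿ`,
included into `ℂ² ⊗ ℂᴺ` via `ℂⁿ ⊕ 0 ⊆ ℂᴺ` (`α' = (α,0)`, `β' = (β,0)`).  Then
`μ₀₀^{ℂᴺ}(Ψ)`, the projection of `ΨΨ*` onto `sl(ℂ²)⊗sl(ℂᴺ)` (written in `2 × 2`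
blocks of `N × N` matrices), equals the block-diagonal matrix
`diag(μ^{ℂⁿ}_{0,1−n/N}(Ψ), −(1/N)·tr_{ℂⁿ}(μ^{ℂⁿ}_{0,1}(Ψ)) ⊗ Id_{ℂᵏ})`,
where `μ^{ℂⁿ}_{0,1−n/N}` subtracts `(1/N)·tr` from each `n × n` block and
`μ^{ℂⁿ}_{0,1}(Ψ)` has plain blocks `(1/2)(αα*−ββ*)`, `αβ*`, `βα*`, `(1/2)(ββ*−αα*)`. -/
theorem stmt_15 (n k : ℕ) (hn : 1 ≤ n) (hk : 1 ≤ k) (α β : Fin n → ℂ) :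
    (fromBlocks
        ((1/2 : ℂ) • tfd (n + k)
          (op (Sum.elim α 0 : Fin n ⊕ Fin k → ℂ) (Sum.elim α 0) -
            op (Sum.elim β 0) (Sum.elim β 0)))
        (tfd (n + k) (op (Sum.elim α 0 : Fin n ⊕ Fin k → ℂ) (Sum.elim β 0)))
        (tfd (n + k) (op (Sum.elim β 0 : Fin n ⊕ Fin k → ℂ) (Sum.elim α 0)))
        ((1/2 : ℂ) • tfd (n + k)
          (op (Sum.elim β 0 : Fin n ⊕ Fin k → ℂ) (Sum.elim β 0) -
            op (Sum.elim α 0) (Sum.elim α 0))))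
      = fromBlocks
          (fromBlocks ((1/2 : ℂ) • tfd (n + k) (op α α - op β β)) 0 0
            ((-(((1/2 : ℂ) * (op α α - op β β).trace) / ((n + k : ℕ) : ℂ))) • 1))
          (fromBlocks (tfd (n + k) (op α β)) 0 0
            ((-((op α β).trace / ((n + k : ℕ) : ℂ))) • 1))
          (fromBlocks (tfd (n + k) (op β α)) 0 0
            ((-((op β α).trace / ((n + k : ℕ) : ℂ))) • 1))
          (fromBlocks ((1/2 : ℂ) • tfd (n + k) (op β β - op α α)) 0 0
            ((-(((1/2 : ℂ) * (op β β - op α α).trace) / ((n + k : ℕ) : ℂ))) • 1)) := by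
  simp only [op_elim]
  rw [show fromBlocks (op α α) 0 0 (0 : Matrix (Fin k) (Fin k) ℂ) -
      fromBlocks (op β β) 0 0 0 = fromBlocks (op α α - op β β) 0 0 0 by
    rw [fromBlocks_sub']; simp]
  rw [show fromBlocks (op β β) 0 0 (0 : Matrix (Fin k) (Fin k) ℂ) -
      fromBlocks (op α α) 0 0 0 = fromBlocks (op β β - op α α) 0 0 0 by
    rw [fromBlocks_sub']; simp]
  rw [smul_tfd_blocks, smul_tfd_blocks, tfd_blocks, tfd_blocks]
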